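/- Finite-dimensional version of weak properness of Λ^{n−1}T_{1,0}: let V be an n-dimensional complex vector space with a fixed background Hermitian inner product h. For a positive-definite Hermitian form g on V, let Λ^{n−1}g denote the induced Hermitian form on Λ^{n−1}V. If Λ^{n−1}g ≤ C·Λ^{n−1}h and det g ≥ det h (determinants with respect to an h-orthonormal basis), then g ≤ C'·h for a constant C' depending only on C and n. -/

import Mathlib

/-!
Choose `P` with `Pᴴ h P = 1` and `Pᴴ g P = diag d`, `d > 0`. Evaluating the hypothesis on
`Λ^{n-1}` at the frame `(P eⱼ)_{j ≠ k}` gives `∏_{j ≠ k} d_j ≤ C`, and `det g ≥ det h` gives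
`∏_j d_j ≥ 1`. Hence every `d_j ≥ C⁻¹`, and for `i ≠ k` we get
`d_i ≤ C / ∏_{j ≠ i, k} d_j ≤ C ^ (n - 1)`, that is `g ≤ C ^ (n - 1) h`.
-/

open Matrix
open scoped ComplexOrder

/-- The Hermitian form induced on `Λ^{n-1}V` by a Hermitian form `g` on `V ≅ ℂⁿ`,
evaluated on the decomposable element `v₁ ∧ … ∧ v_{n-1}` (in `Λ^{n-1}` of an
`n`-dimensional space every element is decomposable): the Gram determinant
`det (⟨v_i, v_j⟩_g)`. -/
noncomputable def lamQuad (n : ℕ) (g : Matrix (Fin n) (Fin n) ℂ)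
    (v : Fin (n - 1) → Fin n → ℂ) : ℝ :=
  (Matrix.det (Matrix.of fun i j => star (v i) ⬝ᵥ g.mulVec (v j))).re

namespace Matrix

variable {n 𝕜 : Type*} [Fintype n] [DecidableEq n] [RCLike 𝕜]

omit [DecidableEq n] in
lemma star_mulVec_dotProduct_mulVec_mulVec (P A : Matrix n n 𝕜) (y z : n → 𝕜) :
    star (P *ᵥ y) ⬝ᵥ A *ᵥ (P *ᵥ z) = star y ⬝ᵥ (Pᴴ * A * P) *ᵥ z := by
  simp only [star_mulVec, dotProduct_mulVec, vecMul_vecMul, Matrix.mul_assoc]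

lemma star_single_dotProduct_mulVec_single (A : Matrix n n 𝕜) (a b : n) :
    star (Pi.single a 1) ⬝ᵥ A *ᵥ Pi.single b 1 = A a b := by
  simp

lemma re_star_dotProduct_diagonal_mulVec (c : n → ℝ) (y : n → 𝕜) :
    RCLike.re (star y ⬝ᵥ diagonal (fun i => (c i : 𝕜)) *ᵥ y) = ∑ i, c i * ‖y i‖ ^ 2 := by
  simp only [dotProduct, mulVec_diagonal, map_sum, Pi.star_apply, RCLike.star_def]
  refine Finset.sum_congr rfl fun i _ => ?_
  rw [mul_left_comm, RCLike.conj_mul, ← RCLike.ofReal_pow, ← RCLike.ofReal_mul, RCLike.ofReal_re]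

lemma IsHermitian.conjTranspose_eigenvectorUnitary_mul_mul {A : Matrix n n 𝕜}
    (hA : A.IsHermitian) :
    (hA.eigenvectorUnitary : Matrix n n 𝕜)ᴴ * A * hA.eigenvectorUnitary =
      diagonal fun i => (hA.eigenvalues i : 𝕜) := by
  have := hA.conjStarAlgAut_star_eigenvectorUnitary
  rwa [Unitary.conjStarAlgAut_star_apply, star_eq_conjTranspose] at this

lemma PosDef.exists_conjTranspose_mul_mul_eq_one {A : Matrix n n 𝕜} (hA : A.PosDef) :
    ∃ P : Matrix n n 𝕜, Pᴴ * A * P = 1 := by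
  obtain ⟨U, e, he, hU⟩ : ∃ (U : Matrix n n 𝕜) (e : n → ℝ), (∀ i, 0 < e i) ∧
      Uᴴ * A * U = diagonal fun i => (e i : 𝕜) :=
    ⟨_, _, hA.eigenvalues_pos, hA.1.conjTranspose_eigenvectorUnitary_mul_mul⟩
  let D : Matrix n n 𝕜 := diagonal fun i => ((√(e i))⁻¹ : ℝ)
  refine ⟨U * D, ?_⟩
  rw [conjTranspose_mul, show Dᴴ * Uᴴ * A * (U * D) = Dᴴ * (Uᴴ * A * U) * D by
    simp only [Matrix.mul_assoc], hU, diagonal_conjTranspose, diagonal_mul_diagonal,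
    diagonal_mul_diagonal, ← diagonal_one]
  congr 1
  ext i
  simp only [Pi.star_apply, RCLike.star_def, RCLike.conj_ofReal]
  norm_cast
  field_simp
  rw [Real.sq_sqrt (he i).le, div_self (he i).ne']

lemma PosDef.exists_conjTranspose_mul_mul_eq_one_and_eq_diagonal {g h : Matrix n n 𝕜}
    (hg : g.PosDef) (hh : h.PosDef) :
    ∃ (P : Matrix n n 𝕜) (d : n → ℝ), (∀ i, 0 < d i) ∧ Pᴴ * h * P = 1 ∧
      Pᴴ * g * P = diagonal fun i => (d i : 𝕜) := by
  obtain ⟨Q, hQ⟩ := hh.exists_conjTranspose_mul_mul_eq_one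
  have hQunit : IsUnit Q := (isUnit_iff_isUnit_det Q).mpr (isUnit_det_of_left_inverse hQ)
  have hM : (Qᴴ * g * Q).PosDef :=
    hg.conjTranspose_mul_mul_same (mulVec_injective_of_isUnit hQunit)
  obtain ⟨U, hUU, hUMU⟩ : ∃ U : Matrix n n 𝕜, Uᴴ * U = 1 ∧
      Uᴴ * (Qᴴ * g * Q) * U = diagonal fun i => (hM.1.eigenvalues i : 𝕜) :=
    ⟨_, by rw [← star_eq_conjTranspose]; exact Unitary.coe_star_mul_self _,
      hM.1.conjTranspose_eigenvectorUnitary_mul_mul⟩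
  refine ⟨Q * U, hM.1.eigenvalues, hM.eigenvalues_pos, ?_, ?_⟩
  · rw [conjTranspose_mul, show Uᴴ * Qᴴ * h * (Q * U) = Uᴴ * (Qᴴ * h * Q) * U by
      simp only [Matrix.mul_assoc], hQ, Matrix.mul_one, hUU]
  · rw [conjTranspose_mul, ← hUMU]
    simp only [Matrix.mul_assoc]

lemma re_star_dotProduct_mulVec_le_of_diagonal_le {g h P : Matrix n n 𝕜} {d : n → ℝ} {c : ℝ}
    (hPh : Pᴴ * h * P = 1) (hPg : Pᴴ * g * P = diagonal fun i => (d i : 𝕜)) (hd : ∀ i, d i ≤ c)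
    (x : n → 𝕜) :
    RCLike.re (star x ⬝ᵥ g *ᵥ x) ≤ c * RCLike.re (star x ⬝ᵥ h *ᵥ x) := by
  obtain ⟨y, rfl⟩ : ∃ y, P *ᵥ y = x :=
    ⟨(Pᴴ * h) *ᵥ x, by rw [mulVec_mulVec, mul_eq_one_comm.mp hPh, one_mulVec]⟩
  have hone : (1 : Matrix n n 𝕜) = diagonal fun _ => ((1 : ℝ) : 𝕜) := by simp
  rw [star_mulVec_dotProduct_mulVec_mulVec, star_mulVec_dotProduct_mulVec_mulVec, hPg, hPh, hone,
    re_star_dotProduct_diagonal_mulVec, re_star_dotProduct_diagonal_mulVec, Finset.mul_sum]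
  exact Finset.sum_le_sum fun i _ => by
    rw [one_mul]
    exact mul_le_mul_of_nonneg_right (hd i) (sq_nonneg _)

end Matrix

lemma Fin.prod_univ_erase_eq_prod_succAbove {M : Type*} [CommMonoid M] {m : ℕ}
    (f : Fin (m + 1) → M) (k : Fin (m + 1)) :
    ∏ j ∈ Finset.univ.erase k, f j = ∏ i : Fin m, f (k.succAbove i) := by
  rw [Fin.univ_succAbove m k, Finset.erase_cons, Finset.prod_map, Fin.coe_succAboveEmb]

lemma lamQuad_succAbove_mulVec_single {m : ℕ} (g P : Matrix (Fin (m + 1)) (Fin (m + 1)) ℂ)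
    (k : Fin (m + 1)) :
    lamQuad (m + 1) g (fun i => P *ᵥ Pi.single (k.succAbove i) 1) =
      ((Pᴴ * g * P).submatrix k.succAbove k.succAbove).det.re := by
  unfold lamQuad
  congr 3
  ext i j
  exact (star_mulVec_dotProduct_mulVec_mulVec ..).trans (star_single_dotProduct_mulVec_single ..)

lemma prod_erase_le_of_lamQuad_le {m : ℕ} {g h P : Matrix (Fin (m + 1)) (Fin (m + 1)) ℂ}
    {d : Fin (m + 1) → ℝ} {C : ℝ} (hPh : Pᴴ * h * P = 1)
    (hPg : Pᴴ * g * P = diagonal fun i => (d i : ℂ))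
    (hlam : ∀ v, lamQuad (m + 1) g v ≤ C * lamQuad (m + 1) h v) (k : Fin (m + 1)) :
    ∏ j ∈ Finset.univ.erase k, d j ≤ C := by
  have := hlam fun i => P *ᵥ Pi.single (k.succAbove i) 1
  rwa [lamQuad_succAbove_mulVec_single, lamQuad_succAbove_mulVec_single, hPg, hPh,
    submatrix_diagonal _ _ Fin.succAbove_right_injective,
    submatrix_one _ Fin.succAbove_right_injective, det_diagonal, det_one, Complex.one_re, mul_one,
    Function.comp_def, ← Complex.ofReal_prod, Complex.ofReal_re,
    ← Fin.prod_univ_erase_eq_prod_succAbove] at this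

lemma one_le_prod_of_det_le {n : Type*} [Fintype n] [DecidableEq n] {g h P : Matrix n n ℂ}
    {d : n → ℝ} (hPh : Pᴴ * h * P = 1) (hPg : Pᴴ * g * P = diagonal fun i => (d i : ℂ))
    (hdet : h.det ≤ g.det) : 1 ≤ ∏ i, d i := by
  have hconj (A : Matrix n n ℂ) : (Pᴴ * A * P).det = star P.det * A.det * P.det := by
    rw [det_mul, det_mul, det_conjTranspose]
  have := star_left_conjugate_le_conjugate hdet P.det
  rw [← hconj, ← hconj, hPh, hPg, det_one, det_diagonal, ← Complex.ofReal_prod] at this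
  exact_mod_cast this

lemma le_pow_of_one_le_prod_of_prod_erase_le {ι : Type*} [Fintype ι] [DecidableEq ι]
    {d : ι → ℝ} {C : ℝ} (hd : ∀ i, 0 < d i) (hprod : 1 ≤ ∏ i, d i)
    (hC : ∀ k, ∏ j ∈ Finset.univ.erase k, d j ≤ C) {i k : ι} (hik : i ≠ k) :
    d i ≤ C ^ (Fintype.card ι - 1) := by
  have hCpos : 0 < C := (Finset.prod_pos fun j _ => hd j).trans_le (hC k)
  have hlow (j : ι) : C⁻¹ ≤ d j := by
    rw [inv_le_iff_one_le_mul₀ hCpos]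
    calc 1 ≤ ∏ t, d t := hprod
      _ = d j * ∏ t ∈ Finset.univ.erase j, d t :=
        (Finset.mul_prod_erase _ _ (Finset.mem_univ j)).symm
      _ ≤ d j * C := mul_le_mul_of_nonneg_left (hC j) (hd j).le
  set s := (Finset.univ.erase k).erase i
  have hi : i ∈ Finset.univ.erase k := Finset.mem_erase.mpr ⟨hik, Finset.mem_univ i⟩
  have hcard : s.card + 1 = Fintype.card ι - 1 := by
    rw [Finset.card_erase_add_one hi, Finset.card_erase_of_mem (Finset.mem_univ k),
      Finset.card_univ]
  have key : d i * C⁻¹ ^ s.card ≤ C :=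
    calc d i * C⁻¹ ^ s.card = d i * ∏ _t ∈ s, C⁻¹ := by rw [Finset.prod_const]
      _ ≤ d i * ∏ t ∈ s, d t := mul_le_mul_of_nonneg_left
        (Finset.prod_le_prod (fun _ _ => inv_nonneg.mpr hCpos.le) fun t _ => hlow t) (hd i).le
      _ = ∏ t ∈ Finset.univ.erase k, d t := Finset.mul_prod_erase _ _ hi
      _ ≤ C := hC k
  rw [← hcard, pow_succ']
  rwa [inv_pow, ← div_eq_mul_inv, div_le_iff₀ (pow_pos hCpos _)] at key

/-- weak properness of `Λ^{n-1}T_{1,0}` (finite-dimensional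
version).  If `g, h` are positive-definite Hermitian forms on an
`n`-dimensional complex vector space with `Λ^{n-1}g ≤ C·Λ^{n-1}h` and
`det g ≥ det h`, then `g ≤ C'·h` with `C'` depending only on `C` and `n`. -/
theorem stmt_5 (n : ℕ) (hn : 2 ≤ n) (C : ℝ) :
    ∃ C' : ℝ, 0 < C' ∧
      ∀ g h : Matrix (Fin n) (Fin n) ℂ, g.PosDef → h.PosDef →
        (∀ v : Fin (n - 1) → Fin n → ℂ, lamQuad n g v ≤ C * lamQuad n h v) →
        h.det.re ≤ g.det.re →
        ∀ x : Fin n → ℂ,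
          (star x ⬝ᵥ g.mulVec x).re ≤ C' * (star x ⬝ᵥ h.mulVec x).re := by
  obtain ⟨m, rfl⟩ : ∃ m, n = m + 1 := ⟨n - 1, by omega⟩
  have : Nontrivial (Fin (m + 1)) := Fin.nontrivial_iff_two_le.mpr hn
  refine ⟨max C 1 ^ m, by positivity, fun g h hg hh hlam hdet x => ?_⟩
  obtain ⟨P, d, hd, hPh, hPg⟩ := hg.exists_conjTranspose_mul_mul_eq_one_and_eq_diagonal hh
  have hdet' : h.det ≤ g.det := Complex.le_def.mpr
    ⟨hdet, (Complex.lt_def.mp hh.det_pos).2.symm.trans (Complex.lt_def.mp hg.det_pos).2⟩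
  have hprod : 1 ≤ ∏ i, d i := one_le_prod_of_det_le hPh hPg hdet'
  have hC (k : Fin (m + 1)) : ∏ j ∈ Finset.univ.erase k, d j ≤ max C 1 :=
    (prod_erase_le_of_lamQuad_le hPh hPg hlam k).trans (le_max_left C 1)
  have hdC (i : Fin (m + 1)) : d i ≤ max C 1 ^ m := by
    obtain ⟨k, hki⟩ := exists_ne i
    simpa using le_pow_of_one_le_prod_of_prod_erase_le hd hprod hC hki.symm
  exact re_star_dotProduct_mulVec_le_of_diagonal_le hPh hPg hdC x
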